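/- Let n ≥ 2 and D ≥ 3 be integers, let a > 0 and F > 0 be reals, let β_0, …, β_n, Γ₀, Σ₀ be reals, and set α_p = 2(D−1)(n−p)·β_p − ((D−2)/D)·(p+1)·β_{p+1} for 0 ≤ p ≤ n−1. Define f : ℝ → ℝ by f(x) = Σ_{p=0}^n β_p · (Γ₀ − (D−2)·x/(D·a·F))^p · (Σ₀ + 2(D−1)·x/(a·F))^{n−p}. Then for every x ∈ ℝ the second derivative of f satisfies f''(x) = (1/(a²F²)) · Σ_{p=0}^{n−2} ( 2(D−1)(n−1−p)·α_p − ((D−2)/D)·(p+1)·α_{p+1} ) · (Γ₀ − (D−2)·x/(D·a·F))^p · (Σ₀ + 2(D−1)·x/(a·F))^{n−2−p}. -/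

import Mathlib

/-!
Along a line, the reduced Lagrangian is a binary form `∑ β_p u^p v^(n-p)` in two affine functions
`u = Γ`, `v = Σ`. Differentiating a binary form of degree `m` gives a binary form of degree `m - 1`
whose coefficients are `v' (m - p) γ_p + u' (p + 1) γ_(p+1)`; applying this twice with
`u' = -(D-2)/(D a F)` and `v' = 2(D-1)/(a F)` produces the factor `1/(a² F²)` and the coefficients `α`.
-/

open Finset

theorem HasDerivAt.sum_mul_pow_mul_pow {𝕜 : Type*} [NontriviallyNormedField 𝕜]
    {u v : 𝕜 → 𝕜} {u' v' x : 𝕜} (hu : HasDerivAt u u' x) (hv : HasDerivAt v v' x)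
    (γ : ℕ → 𝕜) (m : ℕ) :
    HasDerivAt (fun y => ∑ p ∈ range (m + 1), γ p * u y ^ p * v y ^ (m - p))
      (∑ p ∈ range m, (v' * ((m : 𝕜) - p) * γ p + u' * (p + 1) * γ (p + 1)) *
        u x ^ p * v x ^ (m - 1 - p)) x := by
  refine (HasDerivAt.fun_sum (u := range (m + 1))
    fun p _ => ((hu.fun_pow p).const_mul (γ p)).fun_mul (hv.fun_pow (m - p))).congr_deriv ?_
  -- the `u`-part loses its `p = 0` term and the `v`-part its `p = m` term
  rw [sum_add_distrib, sum_range_succ', sum_range_succ]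
  simp only [Nat.cast_zero, zero_mul, mul_zero, Nat.sub_self, add_zero, ← sum_add_distrib]
  refine sum_congr rfl fun p hp => ?_
  have hpm : p < m := mem_range.mp hp
  rw [show m - (p + 1) = m - 1 - p by omega, show m - p - 1 = m - 1 - p by omega,
    Nat.cast_sub hpm.le, Nat.add_sub_cancel]
  push_cast
  ring

theorem stmt_5 (n D : ℕ) (hn : 2 ≤ n)
    (a F : ℝ)
    (β : ℕ → ℝ) (G₀ S₀ : ℝ) :
    let α : ℕ → ℝ := fun p =>
      2 * ((D : ℝ) - 1) * ((n : ℝ) - (p : ℝ)) * β p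
        - ((D : ℝ) - 2) / (D : ℝ) * ((p : ℝ) + 1) * β (p + 1)
    let f : ℝ → ℝ := fun x => ∑ p ∈ Finset.range (n + 1),
      β p * (G₀ - ((D : ℝ) - 2) * x / ((D : ℝ) * a * F)) ^ p *
        (S₀ + 2 * ((D : ℝ) - 1) * x / (a * F)) ^ (n - p)
    ∀ x : ℝ, deriv (deriv f) x = 1 / (a ^ 2 * F ^ 2) *
      ∑ p ∈ Finset.range (n - 1),
        (2 * ((D : ℝ) - 1) * ((n : ℝ) - 1 - (p : ℝ)) * α p
          - ((D : ℝ) - 2) / (D : ℝ) * ((p : ℝ) + 1) * α (p + 1)) *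
        (G₀ - ((D : ℝ) - 2) * x / ((D : ℝ) * a * F)) ^ p *
        (S₀ + 2 * ((D : ℝ) - 1) * x / (a * F)) ^ (n - 2 - p) := by
  intro α f x
  have hu (y : ℝ) : HasDerivAt (fun y => G₀ - ((D : ℝ) - 2) * y / ((D : ℝ) * a * F))
      (-(((D : ℝ) - 2) * 1 / ((D : ℝ) * a * F))) y :=
    (((hasDerivAt_id y).const_mul _).div_const _).const_sub _
  have hv (y : ℝ) : HasDerivAt (fun y => S₀ + 2 * ((D : ℝ) - 1) * y / (a * F))
      (2 * ((D : ℝ) - 1) * 1 / (a * F)) y :=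
    (((hasDerivAt_id y).const_mul _).div_const _).const_add _
  obtain ⟨m, rfl⟩ : ∃ m, n = m + 1 := ⟨n - 1, by omega⟩
  have hf' : deriv f = _ := funext fun y => ((hu y).sum_mul_pow_mul_pow (hv y) β (m + 1)).deriv
  simp only [Nat.add_sub_cancel] at hf' ⊢
  rw [hf', ((hu x).sum_mul_pow_mul_pow (hv x) _ m).deriv, mul_sum]
  refine sum_congr rfl fun p _ => ?_
  rw [show m + 1 - 2 - p = m - 1 - p by omega]
  simp only [α]
  push_cast
  ring
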